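/- arXiv:1402.0544 — 6 statements merged into one kernel-verified Lean document; each statement's English description precedes it below -/
import Mathlib

section
/- For every integer d ≥ 1, every 3-graph H on n vertices has a (d+1)-full subgraph F (a subfamily of the edges of H) with |F| ≥ |H| - d·|∂H|, where |H| and |F| denote numbers of edges and |∂H| is the number of edges of the shadow of H. -/
open Finset

/-- A triple system (3-graph): every edge has exactly 3 vertices. -/
def IsTripleSystem {V : Type*} (H : Finset (Finset V)) : Prop :=
  ∀ e ∈ H, e.card = 3

/-- The shadowGraph `∂H` of a triple system: all 2-element subsets of edges of `H`. -/
def shadowGraph {V : Type*} [DecidableEq V] (H : Finset (Finset V)) : Finset (Finset V) :=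
  H.sup fun e => e.powersetCard 2

/-- The codegree of a pair `f` in `H`: the number of edges of `H` containing `f`. -/
def codeg {V : Type*} [DecidableEq V] (H : Finset (Finset V)) (f : Finset V) : ℕ :=
  (H.filter fun e => f ⊆ e).card

lemma mem_shadowGraph_iff {V : Type*} [DecidableEq V] {H : Finset (Finset V)}
    {f : Finset V} : f ∈ shadowGraph H ↔ ∃ e ∈ H, f ⊆ e ∧ f.card = 2 := by
  simp [shadowGraph, Finset.mem_sup, Finset.mem_powersetCard]

lemma shadowGraph_mono {V : Type*} [DecidableEq V] {A B : Finset (Finset V)}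
    (h : A ⊆ B) : shadowGraph A ⊆ shadowGraph B := Finset.le_iff_subset.mp (Finset.sup_mono h)

lemma full_subgraph_aux {V : Type*} [DecidableEq V] (d : ℕ) :
    ∀ n (H : Finset (Finset V)), H.card ≤ n →
    ∃ F ⊆ H, (∀ f ∈ shadowGraph F, d + 1 ≤ codeg F f) ∧
      (H.card : ℤ) - (d : ℤ) * ((shadowGraph H).card : ℤ) ≤ (F.card : ℤ) := by
  intro n
  induction n with
  | zero =>
    intro H hcard
    refine ⟨∅, Finset.empty_subset _, ?_, ?_⟩
    · intro f hf
      simp [shadowGraph] at hf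
    · have : H = ∅ := Finset.card_eq_zero.mp (Nat.le_zero.mp hcard)
      subst this
      simp [shadowGraph]
  | succ n ih =>
    intro H hcard
    by_cases hfull : ∀ f ∈ shadowGraph H, d + 1 ≤ codeg H f
    · refine ⟨H, Finset.Subset.refl _, hfull, ?_⟩
      have : (0:ℤ) ≤ (d : ℤ) * ((shadowGraph H).card : ℤ) := by positivity
      linarith
    · push_neg at hfull
      obtain ⟨f, hfmem, hflow⟩ := hfull
      set H' := H.filter (fun e => ¬ f ⊆ e) with hH'
      have hsub : H' ⊆ H := Finset.filter_subset _ _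
      obtain ⟨e, heH, hfe, _⟩ := mem_shadowGraph_iff.mp hfmem
      have heH' : e ∉ H' := by simp [hH', hfe]
      have hlt : H'.card < H.card :=
        Finset.card_lt_card ⟨hsub, fun h => heH' (h heH)⟩
      have hcard' : H'.card ≤ n := by omega
      have hsplit : codeg H f + H'.card = H.card := by
        rw [hH', codeg]
        exact Finset.card_filter_add_card_filter_not _
      -- f is not in the shadow of H'
      have hfns : f ∉ shadowGraph H' := by
        intro hf
        obtain ⟨e', he', hfe', _⟩ := mem_shadowGraph_iff.mp hf
        rw [hH', Finset.mem_filter] at he'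
        exact he'.2 hfe'
      have hshsub : shadowGraph H' ⊆ (shadowGraph H).erase f := by
        intro g hg
        exact Finset.mem_erase.mpr ⟨fun h => hfns (h ▸ hg), shadowGraph_mono hsub hg⟩
      have hshcard : (shadowGraph H').card + 1 ≤ (shadowGraph H).card := by
        have h1 := Finset.card_le_card hshsub
        have h2 := Finset.card_erase_of_mem hfmem
        have : 1 ≤ (shadowGraph H).card := Finset.card_pos.mpr ⟨f, hfmem⟩
        omega
      obtain ⟨F, hFsub, hFfull, hFcard⟩ := ih H' hcard'
      refine ⟨F, hFsub.trans hsub, hFfull, ?_⟩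
      have hco : codeg H f ≤ d := by omega
      have c1 : (H.card : ℤ) ≤ (H'.card : ℤ) + d := by
        push_cast [← hsplit]
        have : (codeg H f : ℤ) ≤ d := by exact_mod_cast hco
        linarith
      have c2 : ((shadowGraph H').card : ℤ) + 1 ≤ ((shadowGraph H).card : ℤ) := by
        exact_mod_cast hshcard
      have hd0 : (0:ℤ) ≤ (d:ℤ) := by positivity
      nlinarith [hFcard]

/-- Every triple system `H` has a `(d+1)`-full subgraph `F` (every pair of vertices
contained in an edge of `F` has codegree at least `d+1` in `F`) with
`|F| ≥ |H| - d·|∂H|`. -/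
theorem full_subgraph {V : Type*} [DecidableEq V] (d : ℕ) (hd : 1 ≤ d)
    (H : Finset (Finset V)) (hH : IsTripleSystem H) :
    ∃ F ⊆ H, (∀ f ∈ shadowGraph F, d + 1 ≤ codeg F f) ∧
      (H.card : ℤ) - (d : ℤ) * ((shadowGraph H).card : ℤ) ≤ (F.card : ℤ) := by
  exact full_subgraph_aux d H.card H le_rfl
end

section
/- Let m, t be positive integers and δ > 0, and let H be a 3-graph on n vertices. Suppose F is a subgraph of the shadow ∂H, and for each edge f of F let S_f be a set of m vertices of H disjoint from f. If |F| ≥ δ·n² and n is sufficiently large (depending on m, t, δ), then there exists a subgraph K of F isomorphic to K_{t,t} such that S_f ∩ V(K) = ∅ for every edge f of K. -/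
/-!
Call a map `g` from the `2t` vertices of `K_{t,t}` to the vertex set a homomorphism into `F`
if it sends every cross pair to an edge of `F`. Writing `y` for the right half of `g`, the left
half ranges over maps into the common neighbourhood of `y`, so two applications of the power-mean
inequality give at least `n ^ (2t) (2|F| / n²) ^ (t²) ≥ (2δ)^(t²) n ^ (2t)` homomorphisms.
A homomorphism yields a clean `K_{t,t}` unless two vertices collide or some vertex `g k` lies in
`S` of an edge `{g (inl i), g (inr j)}` not containing it. In either case, once all coordinates
but `k` are fixed, `g k` has at most `max 1 m` values, so there are `O(n ^ (2t - 1))` bad maps,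
and for large `n` a good one exists.
-/

open Finset

lemma card_mul_sum_pow_le {ι α : Type*} [Semiring α] [LinearOrder α] [IsStrictOrderedRing α]
    [ExistsAddOfLE α] {s : Finset ι} {f : ι → α} (hf : ∀ i ∈ s, 0 ≤ f i) :
    ∀ k, #s * (∑ i ∈ s, f i) ^ k ≤ (#s : α) ^ k * ∑ i ∈ s, f i ^ k
  | 0 => by simp
  | k + 1 =>
    calc (#s : α) * (∑ i ∈ s, f i) ^ (k + 1)
        ≤ #s * (#s ^ k * ∑ i ∈ s, f i ^ (k + 1)) := by
          gcongr
          exact pow_sum_le_card_mul_sum_pow hf k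
      _ = (#s : α) ^ (k + 1) * ∑ i ∈ s, f i ^ (k + 1) := by rw [← mul_assoc, ← pow_succ']

lemma card_eq_two_of_mem_shadowGraph {V : Type*} [DecidableEq V] {H : Finset (Finset V)}
    {f : Finset V} (hf : f ∈ shadowGraph H) : #f = 2 := by
  obtain ⟨e, -, hfe⟩ := mem_sup.mp hf
  exact (mem_powersetCard.mp hfe).2

section

variable {V : Type*} [Fintype V] [DecidableEq V]

def nbhd (F : Finset (Finset V)) (v : V) : Finset V := {u | {v, u} ∈ F}

@[simp] lemma mem_nbhd {F : Finset (Finset V)} {v u : V} : u ∈ nbhd F v ↔ {v, u} ∈ F := by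
  simp [nbhd]

lemma card_nbhd_eq_card_filter_mem {F : Finset (Finset V)} (hF : ∀ f ∈ F, #f = 2) (v : V) :
    #(nbhd F v) = #{f ∈ F | v ∈ f} := by
  refine card_nbij (fun u => {v, u}) (fun u hu => by simpa using hu) ?_ ?_
  · intro u _ u' _ h
    have := congrArg ((↑) : Finset V → Set V) h
    simp only [coe_pair, Set.pair_eq_pair_iff, true_and] at this
    grind
  · intro f hf
    obtain ⟨hfF, hvf⟩ := mem_filter.mp hf
    obtain ⟨a, b, hab, rfl⟩ := card_eq_two.mp (hF f hfF)
    rcases mem_insert.mp hvf with rfl | hb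
    · exact ⟨b, by simpa using hfF, rfl⟩
    · rw [mem_singleton.mp hb]
      exact ⟨a, by simpa [pair_comm] using hfF, pair_comm _ _⟩

lemma sum_card_nbhd {F : Finset (Finset V)} (hF : ∀ f ∈ F, #f = 2) :
    ∑ v, #(nbhd F v) = 2 * #F := by
  calc ∑ v, #(nbhd F v) = ∑ v, #{f ∈ F | v ∈ f} := by
        simp_rw [card_nbhd_eq_card_filter_mem hF]
    _ = ∑ f ∈ F, #f := by
        simp_rw [card_eq_sum_ones, sum_filter]
        rw [sum_comm]
        simp
    _ = 2 * #F := by rw [sum_congr rfl hF, sum_const, smul_eq_mul, mul_comm]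

def bipartiteHoms (F : Finset (Finset V)) (s t : ℕ) : Finset (Fin s ⊕ Fin t → V) :=
  {g | ∀ i j, {g (.inl i), g (.inr j)} ∈ F}

def commonNbhd (F : Finset (Finset V)) {t : ℕ} (y : Fin t → V) : Finset V :=
  {v | ∀ j, y j ∈ nbhd F v}

variable {F : Finset (Finset V)} {s t : ℕ}

lemma card_bipartiteHoms :
    #(bipartiteHoms F s t) = ∑ y : Fin t → V, #(commonNbhd F y) ^ s := by
  rw [card_eq_sum_card_fiberwise (f := fun g => g ∘ Sum.inr) (t := univ) (fun _ _ => mem_univ _)]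
  refine sum_congr rfl fun y _ => ?_
  rw [← Fintype.card_piFinset_const]
  refine card_nbij' (fun g => g ∘ Sum.inl) (fun x => Sum.elim x y) ?_ ?_ ?_ ?_
  · intro g hg
    simp only [bipartiteHoms, coe_filter, mem_filter, mem_univ, true_and] at hg
    simp only [mem_coe, Fintype.mem_piFinset, commonNbhd, mem_filter, mem_univ, true_and,
      mem_nbhd]
    intro i j
    simpa [← hg.2] using hg.1 i j
  · intro x hx
    simp_all [bipartiteHoms, commonNbhd]
  · intro g hg
    simp only [coe_filter] at hg
    ext (i | j)
    · rfl
    · exact congrFun hg.2 j |>.symm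
  · intro x _
    rfl

lemma sum_card_commonNbhd : ∑ y : Fin t → V, #(commonNbhd F y) = ∑ v, #(nbhd F v) ^ t := by
  simp_rw [commonNbhd, card_filter]
  rw [sum_comm]
  refine sum_congr rfl fun v _ => ?_
  rw [← card_filter, ← Fintype.card_piFinset_const]
  congr 1
  ext y
  simp [Fintype.mem_piFinset]

lemma card_pow_mul_sum_card_nbhd_pow_le (F : Finset (Finset V)) (s t : ℕ) :
    Fintype.card V ^ (s + t) * (∑ v, #(nbhd F v)) ^ (s * t)
      ≤ #(bipartiteHoms F s t) * Fintype.card V ^ (2 * (s * t)) := by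
  set n := Fintype.card V
  have jensen_v :
      n * (∑ v, #(nbhd F v)) ^ t ≤ n ^ t * ∑ y : Fin t → V, #(commonNbhd F y) := by
    simpa [sum_card_commonNbhd, n] using
      card_mul_sum_pow_le (s := univ) (f := fun v => #(nbhd F v)) (fun _ _ => Nat.zero_le _) t
  have jensen_y : n ^ t * (∑ y : Fin t → V, #(commonNbhd F y)) ^ s
      ≤ (n ^ t) ^ s * #(bipartiteHoms F s t) := by
    simpa [card_bipartiteHoms, n] using
      card_mul_sum_pow_le (s := univ) (f := fun y : Fin t → V => #(commonNbhd F y))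
        (fun _ _ => Nat.zero_le _) s
  calc n ^ (s + t) * (∑ v, #(nbhd F v)) ^ (s * t)
      = n ^ t * (n * (∑ v, #(nbhd F v)) ^ t) ^ s := by ring
    _ ≤ n ^ t * (n ^ t * ∑ y : Fin t → V, #(commonNbhd F y)) ^ s := by gcongr
    _ = (n ^ t) ^ s * (n ^ t * (∑ y : Fin t → V, #(commonNbhd F y)) ^ s) := by ring
    _ ≤ (n ^ t) ^ s * ((n ^ t) ^ s * #(bipartiteHoms F s t)) := by gcongr
    _ = #(bipartiteHoms F s t) * n ^ (2 * (s * t)) := by ring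

lemma card_filter_apply_mem_mul_card_le {ι : Type*} [Fintype ι] [DecidableEq ι] (k : ι)
    (B : (ι → V) → Finset V) (hB : ∀ g v, B (Function.update g k v) = B g) {b : ℕ}
    (hb : ∀ g, #(B g) ≤ b) :
    #{g : ι → V | g k ∈ B g} * Fintype.card V ≤ b * Fintype.card V ^ Fintype.card ι := by
  calc #{g : ι → V | g k ∈ B g} * Fintype.card V
      = #(({g : ι → V | g k ∈ B g} : Finset (ι → V)) ×ˢ (univ : Finset V)) := by
        rw [card_product, card_univ]
    _ ≤ #(univ.sigma B) := by
        refine card_le_card_of_injOn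
          (fun p : (ι → V) × V => ⟨Function.update p.1 k p.2, p.1 k⟩) ?_ ?_
        · intro p hp
          simp only [coe_product, Set.mem_prod, mem_coe, mem_filter] at hp
          simpa [hB] using hp.1.2
        · intro p _ q _ hpq
          simp only [Sigma.mk.injEq, heq_eq_eq] at hpq
          obtain ⟨hupd, hk⟩ := hpq
          refine Prod.ext ?_ (by simpa using congrFun hupd k)
          calc p.1 = Function.update (Function.update p.1 k p.2) k (p.1 k) := by simp
            _ = Function.update (Function.update q.1 k q.2) k (q.1 k) := by rw [hupd, hk]
            _ = q.1 := by simp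
    _ = ∑ g, #(B g) := card_sigma _ _
    _ ≤ b * Fintype.card V ^ Fintype.card ι := by
        simpa [mul_comm] using sum_le_card_nsmul univ (fun g => #(B g)) b (fun g _ => hb g)

lemma card_biUnion_filter_apply_mem_mul_card_le {ι α : Type*} [Fintype ι] [DecidableEq ι]
    (W : Finset α) (k : α → ι) (B : α → (ι → V) → Finset V)
    (hB : ∀ w ∈ W, ∀ g v, B w (Function.update g (k w) v) = B w g) {b : ℕ}
    (hb : ∀ w ∈ W, ∀ g, #(B w g) ≤ b) :
    #(W.biUnion fun w => {g : ι → V | g (k w) ∈ B w g}) * Fintype.card V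
      ≤ #W * b * Fintype.card V ^ Fintype.card ι := by
  calc #(W.biUnion fun w => {g : ι → V | g (k w) ∈ B w g}) * Fintype.card V
      ≤ (∑ w ∈ W, #{g : ι → V | g (k w) ∈ B w g}) * Fintype.card V := by
        gcongr
        exact card_biUnion_le
    _ ≤ ∑ _w ∈ W, b * Fintype.card V ^ Fintype.card ι := by
        rw [sum_mul]
        exact sum_le_sum fun w hw =>
          card_filter_apply_mem_mul_card_le (k w) (B w) (hB w hw) (hb w hw)
    _ = #W * b * Fintype.card V ^ Fintype.card ι := by rw [sum_const, smul_eq_mul, mul_assoc]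

lemma card_filter_not_injective_mul_card_le {ι : Type*} [Fintype ι] [DecidableEq ι] :
    #{g : ι → V | ¬Function.Injective g} * Fintype.card V
      ≤ Fintype.card ι ^ 2 * Fintype.card V ^ Fintype.card ι := by
  have hsub : ({g : ι → V | ¬Function.Injective g} : Finset (ι → V))
      ⊆ univ.offDiag.biUnion fun p => {g | g p.1 ∈ ({g p.2} : Finset V)} := by
    intro g hg
    obtain ⟨a, b, hab, hne⟩ := Function.not_injective_iff.mp (mem_filter.mp hg).2
    exact mem_biUnion.mpr ⟨(a, b), by simpa using hne, by simpa⟩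
  calc #{g : ι → V | ¬Function.Injective g} * Fintype.card V
      ≤ _ := Nat.mul_le_mul_right _ (card_le_card hsub)
    _ ≤ #(univ : Finset ι).offDiag * 1 * Fintype.card V ^ Fintype.card ι :=
        card_biUnion_filter_apply_mem_mul_card_le _ _ _
          (fun p hp g v => by simp [Function.update_of_ne (mem_offDiag.mp hp).2.2.symm])
          (fun _ _ _ => by simp)
    _ ≤ Fintype.card ι ^ 2 * Fintype.card V ^ Fintype.card ι := by
        gcongr
        simp [offDiag_card, sq]

lemma card_filter_hits_forbidden_set_mul_card_le {S : Finset V → Finset V} {m : ℕ}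
    (hSm : ∀ f ∈ F, #(S f) ≤ m) :
    #{g : Fin s ⊕ Fin t → V | ∃ i j k, k ≠ .inl i ∧ k ≠ .inr j ∧
        {g (.inl i), g (.inr j)} ∈ F ∧ g k ∈ S {g (.inl i), g (.inr j)}} * Fintype.card V
      ≤ s * t * (s + t) * m * Fintype.card V ^ (s + t) := by
  set W : Finset (Fin s × Fin t × (Fin s ⊕ Fin t)) :=
    {w | w.2.2 ≠ .inl w.1 ∧ w.2.2 ≠ .inr w.2.1}
  set B : Fin s × Fin t × (Fin s ⊕ Fin t) → (Fin s ⊕ Fin t → V) → Finset V := fun w g =>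
    if {g (.inl w.1), g (.inr w.2.1)} ∈ F then S {g (.inl w.1), g (.inr w.2.1)} else ∅
  have hsub : ({g : Fin s ⊕ Fin t → V | ∃ i j k, k ≠ .inl i ∧ k ≠ .inr j ∧
        {g (.inl i), g (.inr j)} ∈ F ∧ g k ∈ S {g (.inl i), g (.inr j)}} : Finset _)
      ⊆ W.biUnion fun w => {g | g w.2.2 ∈ B w g} := by
    intro g hg
    obtain ⟨i, j, k, hki, hkj, hF, hk⟩ := (mem_filter.mp hg).2
    exact mem_biUnion.mpr ⟨(i, j, k), by simp [W, hki, hkj], by simpa [B, hF] using hk⟩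
  have hbound := card_biUnion_filter_apply_mem_mul_card_le W (fun w => w.2.2) B
    (fun w hw g v => by
      obtain ⟨h1, h2⟩ := (mem_filter.mp hw).2
      simp [B, Function.update_of_ne h1.symm, Function.update_of_ne h2.symm])
    (b := m) (fun w _ g => by unfold B; split_ifs with h; exacts [hSm _ h, by simp])
  rw [Fintype.card_sum, Fintype.card_fin, Fintype.card_fin] at hbound
  calc _ ≤ _ := Nat.mul_le_mul_right _ (card_le_card hsub)
    _ ≤ #W * m * Fintype.card V ^ (s + t) := hbound
    _ ≤ s * t * (s + t) * m * Fintype.card V ^ (s + t) := by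
        gcongr
        exact (card_le_univ W).trans (by simp [mul_assoc])

lemma card_bipartiteHoms_mul_card_le {S : Finset V → Finset V} {m : ℕ}
    (hSm : ∀ f ∈ F, #(S f) ≤ m) (hSf : ∀ f ∈ F, Disjoint (S f) f)
    (hbad : ∀ g ∈ bipartiteHoms F s t, Function.Injective g →
      ∃ i j k, g k ∈ S {g (.inl i), g (.inr j)}) :
    #(bipartiteHoms F s t) * Fintype.card V
      ≤ ((s + t) ^ 2 + s * t * (s + t) * m) * Fintype.card V ^ (s + t) := by
  have hcollide := card_filter_not_injective_mul_card_le (V := V) (ι := Fin s ⊕ Fin t)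
  rw [Fintype.card_sum, Fintype.card_fin, Fintype.card_fin] at hcollide
  have hforbidden := card_filter_hits_forbidden_set_mul_card_le (s := s) (t := t) hSm
  rw [add_mul]
  refine le_trans (Nat.mul_le_mul_right _ ((card_le_card ?_).trans (card_union_le _ _)))
    ((add_mul _ _ _).trans_le (add_le_add hcollide hforbidden))
  intro g hg
  simp only [mem_union, mem_filter, mem_univ, true_and]
  by_cases hinj : Function.Injective g
  · obtain ⟨i, j, k, hk⟩ := hbad g hg hinj
    have hF : {g (.inl i), g (.inr j)} ∈ F := (mem_filter.mp hg).2 i j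
    have hkij := disjoint_left.mp (hSf _ hF) hk
    refine .inr ⟨i, j, k, ?_, ?_, hF, hk⟩ <;> rintro rfl <;> simp at hkij
  · exact .inl hinj

lemma exists_biclique_of_injective_mem_bipartiteHoms {S : Finset V → Finset V}
    {g : Fin s ⊕ Fin t → V} (hg : g ∈ bipartiteHoms F s t) (hinj : Function.Injective g)
    (hclean : ∀ i j k, g k ∉ S {g (.inl i), g (.inr j)}) :
    ∃ X Y : Finset V, Disjoint X Y ∧ #X = s ∧ #Y = t ∧
      ∀ x ∈ X, ∀ y ∈ Y, {x, y} ∈ F ∧ Disjoint (S {x, y}) (X ∪ Y) := by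
  refine ⟨univ.image (g ∘ .inl), univ.image (g ∘ .inr), ?_, ?_, ?_, ?_⟩
  · simp [disjoint_left, hinj.eq_iff]
  · simp [card_image_of_injective _ (hinj.comp Sum.inl_injective)]
  · simp [card_image_of_injective _ (hinj.comp Sum.inr_injective)]
  · simp only [mem_image, mem_univ, true_and, Function.comp_apply, forall_exists_index,
      forall_apply_eq_imp_iff]
    intro i j
    refine ⟨(mem_filter.mp hg).2 i j, disjoint_right.mpr ?_⟩
    simp only [mem_union, mem_image, mem_univ, true_and, Function.comp_apply]
    rintro _ (⟨i', rfl⟩ | ⟨j', rfl⟩)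
    exacts [hclean i j _, hclean i j _]

lemma card_mul_two_mul_card_pow_le_of_not_clean {S : Finset V → Finset V} {m : ℕ}
    (hF : ∀ f ∈ F, #f = 2) (hSm : ∀ f ∈ F, #(S f) ≤ m)
    (hSf : ∀ f ∈ F, Disjoint (S f) f)
    (hbad : ∀ g ∈ bipartiteHoms F s t, Function.Injective g →
      ∃ i j k, g k ∈ S {g (.inl i), g (.inr j)}) :
    Fintype.card V * (2 * #F) ^ (s * t)
      ≤ ((s + t) ^ 2 + s * t * (s + t) * m) * Fintype.card V ^ (2 * (s * t)) := by
  set n := Fintype.card V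
  set K := (s + t) ^ 2 + s * t * (s + t) * m
  have hlower := card_pow_mul_sum_card_nbhd_pow_le F s t
  rw [sum_card_nbhd hF] at hlower
  have hupper := card_bipartiteHoms_mul_card_le hSm hSf hbad
  rcases Nat.eq_zero_or_pos n with hn | hn
  · simp [hn]
  refine Nat.le_of_mul_le_mul_left ?_ (pow_pos hn (s + t))
  calc n ^ (s + t) * (n * (2 * #F) ^ (s * t))
      = n * (n ^ (s + t) * (2 * #F) ^ (s * t)) := by ring
    _ ≤ n * (#(bipartiteHoms F s t) * n ^ (2 * (s * t))) := by gcongr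
    _ = #(bipartiteHoms F s t) * n * n ^ (2 * (s * t)) := by ring
    _ ≤ K * n ^ (s + t) * n ^ (2 * (s * t)) := by gcongr
    _ = n ^ (s + t) * (K * n ^ (2 * (s * t))) := by ring

end

theorem clean_Ktt_in_dense_shadow_general (m t : ℕ)
    (δ : ℝ) (hδ : 0 < δ) :
    ∃ n₀ : ℕ, ∀ n ≥ n₀, ∀ H : Finset (Finset (Fin n)), IsTripleSystem H →
      ∀ F : Finset (Finset (Fin n)), F ⊆ shadowGraph H →
      ∀ S : Finset (Fin n) → Finset (Fin n),
        (∀ f ∈ F, (S f).card = m ∧ Disjoint (S f) f) →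
        δ * (n : ℝ) ^ 2 ≤ (F.card : ℝ) →
        ∃ X Y : Finset (Fin n), Disjoint X Y ∧ X.card = t ∧ Y.card = t ∧
          ∀ x ∈ X, ∀ y ∈ Y, ({x, y} : Finset (Fin n)) ∈ F ∧
            Disjoint (S {x, y}) (X ∪ Y) := by
  set K := (t + t) ^ 2 + t * t * (t + t) * m
  set c := (2 * δ) ^ (t * t)
  refine ⟨⌊K / c⌋₊ + 1, fun n hn H _ F hFH S hS hdense => ?_⟩
  by_contra hno
  have hbad : ∀ g ∈ bipartiteHoms F t t, Function.Injective g →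
      ∃ i j k, g k ∈ S {g (.inl i), g (.inr j)} := by
    intro g hg hinj
    by_contra! hclean
    exact hno (exists_biclique_of_injective_mem_bipartiteHoms hg hinj hclean)
  have hsparse := card_mul_two_mul_card_pow_le_of_not_clean
    (fun f hf => card_eq_two_of_mem_shadowGraph (hFH hf)) (fun f hf => (hS f hf).1.le)
    (fun f hf => (hS f hf).2) hbad
  rw [Fintype.card_fin] at hsparse
  have hKc : K < c * n := by
    rw [← div_lt_iff₀' (by positivity)]
    exact (Nat.lt_floor_add_one _).trans_le (by exact_mod_cast hn)
  have hcn : c * n * (n : ℝ) ^ (2 * (t * t)) ≤ K * (n : ℝ) ^ (2 * (t * t)) :=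
    calc c * n * (n : ℝ) ^ (2 * (t * t)) = n * (2 * δ * n ^ 2) ^ (t * t) := by ring
      _ ≤ n * (2 * #F) ^ (t * t) := by gcongr n * ?_ ^ _; linarith
      _ ≤ K * (n : ℝ) ^ (2 * (t * t)) := by exact_mod_cast hsparse
  have hpos : 0 < n := by omega
  linarith [le_of_mul_le_mul_right hcn (by positivity)]

/-- Let `H` be a triple system on `n` vertices, `F ⊆ ∂H` a graph, and for each edge
`f ∈ F` let `S f` be a set of `m` vertices disjoint from `f`. If `|F| ≥ δn²` and `n`
is large (depending on `m`, `t`, `δ`), then `F` contains a copy `K` of `K_{t,t}`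
(with parts `X`, `Y`) such that `S f ∩ V(K) = ∅` for every edge `f` of `K`. -/
theorem clean_Ktt_in_dense_shadow (m t : ℕ) (hm : 0 < m) (ht : 0 < t)
    (δ : ℝ) (hδ : 0 < δ) :
    ∃ n₀ : ℕ, ∀ n ≥ n₀, ∀ H : Finset (Finset (Fin n)), IsTripleSystem H →
      ∀ F : Finset (Finset (Fin n)), F ⊆ shadowGraph H →
      ∀ S : Finset (Fin n) → Finset (Fin n),
        (∀ f ∈ F, (S f).card = m ∧ Disjoint (S f) f) →
        δ * (n : ℝ) ^ 2 ≤ (F.card : ℝ) →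
        ∃ X Y : Finset (Fin n), Disjoint X Y ∧ X.card = t ∧ Y.card = t ∧
          ∀ x ∈ X, ∀ y ∈ Y, ({x, y} : Finset (Fin n)) ∈ F ∧
            Disjoint (S {x, y}) (X ∪ Y) :=
  clean_Ktt_in_dense_shadow_general m t δ hδ
end

section
/- Let A_1, …, A_m be pairwise disjoint subsets of a set V and let a_1, …, a_m be distinct elements of V. Then there exist ⌈m/3⌉ indices i for which the sets A_i ∪ {a_i} are pairwise disjoint. -/
open Finset

private lemma key_aux {V : Type*} [DecidableEq V] (m : ℕ)
    (A : Fin m → Finset V) (a : Fin m → V)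
    (hA : ∀ i j, i ≠ j → Disjoint (A i) (A j)) :
    ∀ n : ℕ, ∀ S : Finset (Fin m), S.card ≤ n →
      ∃ I ⊆ S, (S.card + 2) / 3 ≤ I.card ∧
        ∀ i ∈ I, ∀ j ∈ I, i ≠ j → a i ∉ A j := by
  intro n
  induction n with
  | zero =>
      intro S hS
      refine ⟨∅, empty_subset _, ?_, by simp⟩
      interval_cases h : S.card <;> simp
  | succ n ih =>
      intro S hS
      rcases S.eq_empty_or_nonempty with rfl | hne
      · exact ⟨∅, empty_subset _, by simp, by simp⟩
      -- out-degree ≤ 1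
      have hout : ∀ i, (S.filter (fun j => a i ∈ A j)).card ≤ 1 := by
        intro i
        rw [Finset.card_le_one]
        intro j₁ hj₁ j₂ hj₂
        simp only [mem_filter] at hj₁ hj₂
        by_contra hne'
        exact Finset.disjoint_left.mp (hA j₁ j₂ hne') hj₁.2 hj₂.2
      -- sum of in-degrees = sum of out-degrees ≤ |S|
      have hsum_out : ∑ i ∈ S, (S.filter (fun j => a i ∈ A j)).card ≤ S.card := by
        calc ∑ i ∈ S, (S.filter (fun j => a i ∈ A j)).card
            ≤ ∑ _i ∈ S, 1 := Finset.sum_le_sum (fun i _ => hout i)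
          _ = S.card := by simp
      have hsum_in : ∑ i ∈ S, (S.filter (fun j => a j ∈ A i)).card ≤ S.card := by
        have : ∑ i ∈ S, (S.filter (fun j => a j ∈ A i)).card
            = ∑ j ∈ S, (S.filter (fun i => a j ∈ A i)).card := by
          simp only [Finset.card_filter]
          exact Finset.sum_comm
        rw [this]
        calc ∑ j ∈ S, (S.filter (fun i => a j ∈ A i)).card
            ≤ ∑ _j ∈ S, 1 := Finset.sum_le_sum (fun j _ => hout j)
          _ = S.card := by simp
      -- there is a vertex of degree ≤ 2
      have hdeg : ∃ v ∈ S, (S.filter (fun j => a v ∈ A j)).card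
          + (S.filter (fun j => a j ∈ A v)).card ≤ 2 := by
        by_contra h
        push_neg at h
        have h3 : ∀ v ∈ S, 3 ≤ (S.filter (fun j => a v ∈ A j)).card
            + (S.filter (fun j => a j ∈ A v)).card := fun v hv => h v hv
        have := Finset.sum_le_sum h3
        simp only [Finset.sum_const, smul_eq_mul] at this
        rw [Finset.sum_add_distrib] at this
        have hc : 0 < S.card := Finset.card_pos.mpr hne
        omega
      obtain ⟨v, hvS, hv2⟩ := hdeg
      set N : Finset (Fin m) := S.filter (fun j => a v ∈ A j ∨ a j ∈ A v) with hN
      have hNcard : N.card ≤ 2 := by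
        have hsub : N ⊆ S.filter (fun j => a v ∈ A j) ∪ S.filter (fun j => a j ∈ A v) := by
          intro x hx
          simp only [hN, mem_filter, mem_union] at hx ⊢
          tauto
        calc N.card ≤ _ := Finset.card_le_card hsub
          _ ≤ _ := Finset.card_union_le _ _
          _ ≤ 2 := hv2
      set S' : Finset (Fin m) := S \ insert v N with hS'
      have hS'sub : S' ⊆ S := Finset.sdiff_subset
      have hvS' : v ∉ S' := by simp [hS']
      have hS'lt : S'.card < S.card :=
        Finset.card_lt_card ⟨hS'sub, fun h => hvS' (h hvS)⟩
      have hS'card : S.card ≤ S'.card + 3 := by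
        have h1 : S ⊆ S' ∪ insert v N := by
          intro x hx
          simp only [hS', mem_union, mem_sdiff]
          tauto
        have h2 := Finset.card_le_card h1
        have h3 := Finset.card_union_le S' (insert v N)
        have h4 := Finset.card_insert_le v N
        omega
      obtain ⟨I', hI'sub, hI'card, hI'good⟩ := ih S' (by omega)
      have hvI' : v ∉ I' := fun h => hvS' (hI'sub h)
      refine ⟨insert v I', ?_, ?_, ?_⟩
      · intro x hx
        rcases Finset.mem_insert.mp hx with rfl | hx
        · exact hvS
        · exact hS'sub (hI'sub hx)
      · rw [Finset.card_insert_of_notMem hvI']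
        have hc : 1 ≤ S.card := Finset.card_pos.mpr hne
        omega
      · intro i hi j hj hij
        rcases Finset.mem_insert.mp hi with hiv | hi <;>
          rcases Finset.mem_insert.mp hj with hjv | hj
        · exact absurd (hiv.trans hjv.symm) hij
        · -- i = v, j ∈ I'
          have hjS' : j ∈ S' := hI'sub hj
          rw [hS', mem_sdiff] at hjS'
          have h2 : j ∉ insert v N := hjS'.2
          rw [Finset.mem_insert, hN, mem_filter] at h2
          push_neg at h2
          rw [hiv]
          exact (h2.2 hjS'.1).1
        · -- j = v, i ∈ I'
          have hiS' : i ∈ S' := hI'sub hi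
          rw [hS', mem_sdiff] at hiS'
          have h2 : i ∉ insert v N := hiS'.2
          rw [Finset.mem_insert, hN, mem_filter] at h2
          push_neg at h2
          rw [hjv]
          exact (h2.2 hiS'.1).2
        · exact hI'good i hi j hj hij

/-- Let `A₁, …, A_m` be pairwise disjoint subsets of `V` and `a₁, …, a_m` distinct
elements of `V` (possibly `aᵢ ∈ Aᵢ`). Then there are `⌈m/3⌉` indices `i` for which the
sets `Aᵢ ∪ {aᵢ}` are pairwise disjoint. -/
theorem disjoint_augmented_sets {V : Type*} [DecidableEq V] (m : ℕ)
    (A : Fin m → Finset V) (a : Fin m → V)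
    (hA : ∀ i j, i ≠ j → Disjoint (A i) (A j)) (ha : Function.Injective a) :
    ∃ I : Finset (Fin m), (m + 2) / 3 ≤ I.card ∧
      ∀ i ∈ I, ∀ j ∈ I, i ≠ j → Disjoint (insert (a i) (A i)) (insert (a j) (A j)) := by
  obtain ⟨I, -, hcard, hgood⟩ := key_aux m A a hA (Finset.univ.card) Finset.univ le_rfl
  refine ⟨I, by simpa using hcard, ?_⟩
  intro i hi j hj hij
  rw [Finset.disjoint_insert_left, Finset.disjoint_insert_right]
  refine ⟨?_, ?_, hA i j hij⟩
  · simp only [Finset.mem_insert]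
    push_neg
    exact ⟨fun h => hij (ha h), hgood i hi j hj hij⟩
  · exact hgood j hj i hi hij.symm
end

section
/- Let T be a tree with σ(T^+) = ℓ + 1 > 0, and let (I, R) be an optimal crosscut pair of T maximizing |I| among all optimal crosscut pairs. Then (a) |R| ≤ ℓ/2, and (b) no pendant edge of T (an edge incident to a leaf) belongs to R. -/
open Finset

/-- `H` contains a copy of the hypergraph `F`: there is a map of the vertices of `F`
into the vertices of `H`, injective on the vertices covered by edges of `F`,
sending every edge of `F` to an edge of `H`. -/
def HasCopy {V W : Type*} [DecidableEq V] (H : Finset (Finset V)) (F : Finset (Finset W)) : Prop :=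
  ∃ φ : W → V, Set.InjOn φ {w | ∃ e ∈ F, w ∈ e} ∧ ∀ e ∈ F, e.image φ ∈ H

/-- The Turán number `ex₃(n, F)`: the maximum number of edges in a triple system on
`n` vertices containing no copy of `F`. -/
noncomputable def exTriple {W : Type*} (n : ℕ) (F : Finset (Finset W)) : ℕ :=
  sSup {m | ∃ H : Finset (Finset (Fin n)), IsTripleSystem H ∧ ¬ HasCopy H F ∧ H.card = m}

/-- A crosscut of a hypergraph: a set of vertices containing exactly one vertex
of every edge. -/
def IsCrosscut {W : Type*} [DecidableEq W] (F : Finset (Finset W)) (X : Finset W) : Prop :=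
  ∀ e ∈ F, (e ∩ X).card = 1

/-- `σ(F)`: the minimum size of a crosscut of `F`. -/
noncomputable def crosscutNum {W : Type*} [DecidableEq W] (F : Finset (Finset W)) : ℕ :=
  sInf {m | ∃ X : Finset W, IsCrosscut F X ∧ X.card = m}

/-- The 3-uniform expansion `G⁺` of a graph `G`: each edge `e` of `G` is enlarged by a
new vertex (the vertices of `G` are `Sum.inl`'s; the enlargement vertex of the edge `e`
is `Sum.inr e`, so distinct edges get distinct new vertices). -/
noncomputable def expansion {V : Type*} [Fintype V] [DecidableEq V] (G : SimpleGraph V) :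
    Finset (Finset (V ⊕ Sym2 V)) := by
  classical
  exact G.edgeFinset.image fun e =>
    insert (Sum.inr e) ((Finset.univ.filter fun v => v ∈ e).image Sum.inl)

/-- The set of edges of `G` disjoint from the vertex set `I`; if `I` is independent,
`(I, cutEdges G I)` is the crosscut pair determined by `I`. -/
noncomputable def cutEdges {V : Type*} [Fintype V] [DecidableEq V] (G : SimpleGraph V)
    (I : Finset V) : Finset (Sym2 V) := by
  classical
  exact G.edgeFinset.filter fun e => ∀ a ∈ I, a ∉ e

/-- A leaf of a graph: a vertex of degree 1, i.e. with a unique neighbour. -/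
def IsLeaf {V : Type*} (G : SimpleGraph V) (v : V) : Prop :=
  ∃! w, G.Adj v w

/-! Maximality of `|I|` forces every endpoint `v` of an edge of `R` to have a neighbour in `I`:
otherwise `I ∪ {v}` is still independent and leaves at least one edge fewer uncovered, so it is
again optimal (`σ(G⁺) ≤ |J| + |R_J|` for every independent `J`, via the crosscut `J ∪ R_J`).
For a pendant edge this neighbour would have to be the other endpoint of the edge, which is not
in `I`. For (a), let `S` be the set of endpoints of edges of `R`; the edges of `R` together with
one edge from each vertex of `S` to a neighbour in `I` are `|R| + |S|` distinct edges of the tree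
with all endpoints in `S ∪ I`, and a forest has fewer edges than vertices, so `|R| < |I|`;
with `|I| + |R| = ℓ + 1` this gives `2|R| ≤ ℓ`. -/

namespace SimpleGraph

variable {V : Type*} {G : SimpleGraph V}

lemma IsAcyclic.eq_penultimate_of_dist_eq_add_one (hG : G.IsAcyclic) {r a b : V}
    {q : G.Walk r b} (hq : q.IsPath) (hab : G.Adj a b) (hra : G.Reachable r a)
    (hdist : G.dist r b = G.dist r a + 1) : a = q.penultimate := by
  classical
  obtain ⟨p, hp, hplen⟩ := hra.exists_path_of_dist
  refine hG.eq_penultimate_of_adj_end hq hab.symm ?_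
  by_contra ha
  have hb := hG.mem_support_of_ne_mem_support_of_adj_of_isPath hp hq hab ha
  have := (dist_le (p.takeUntil b hb)).trans (p.length_takeUntil_le_length hb)
  omega

lemma IsTree.card_add_one_le_card_of_endpoints_mem {T : SimpleGraph V} (hT : T.IsTree)
    {E : Finset (Sym2 V)} {U : Finset V} (hE : ∀ e ∈ E, e ∈ T.edgeSet) (hEU : ∀ e ∈ E, ∀ v ∈ e, v ∈ U)
    (hU : U.Nonempty) : #E + 1 ≤ #U := by
  classical
  obtain ⟨r, hr⟩ := hU
  rw [← Finset.card_erase_add_one hr, Nat.add_le_add_iff_right]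
  -- each edge is charged to its endpoint farther from `r`
  refine Finset.card_le_card_of_forall_subsingleton
    (fun e v ↦ ∃ a, e = s(a, v) ∧ T.dist r v = T.dist r a + 1) ?_ ?_
  · intro e he
    induction e using Sym2.ind with | _ x y =>
    have hxy : T.Adj x y := hE _ he
    rcases hT.dist_eq_dist_add_one_of_adj r hxy with h | h
    · refine ⟨x, Finset.mem_erase.2 ⟨?_, hEU _ he x (Sym2.mem_mk_left x y)⟩, y, Sym2.eq_swap, h⟩
      rintro rfl
      simp at h
    · refine ⟨y, Finset.mem_erase.2 ⟨?_, hEU _ he y (Sym2.mem_mk_right x y)⟩, x, rfl, h⟩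
      rintro rfl
      simp at h
  · rintro v - e₁ ⟨he₁, a₁, rfl, h₁⟩ e₂ ⟨he₂, a₂, rfl, h₂⟩
    obtain ⟨q, hq, -⟩ := hT.connected.exists_path_of_dist r v
    have := hT.isAcyclic.eq_penultimate_of_dist_eq_add_one hq (hE _ he₁) (hT.connected r a₁) h₁
    have := hT.isAcyclic.eq_penultimate_of_dist_eq_add_one hq (hE _ he₂) (hT.connected r a₂) h₂
    simp_all

lemma IsTree.card_lt_card_of_forall_exists_adj [DecidableEq V] {T : SimpleGraph V}
    (hT : T.IsTree) {R : Finset (Sym2 V)} {S I : Finset V}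
    (hR : ∀ e ∈ R, e ∈ T.edgeSet) (hRS : ∀ e ∈ R, ∀ v ∈ e, v ∈ S) (hSI : Disjoint S I)
    (hS : ∀ v ∈ S, ∃ w ∈ I, T.Adj v w) (hI : I.Nonempty) : #R < #I := by
  choose! g hgI hgadj using hS
  set E := R ∪ S.image fun v ↦ s(v, g v)
  have hEcard : #E = #R + #S := by
    rw [card_union_of_disjoint, card_image_of_injOn]
    · intro v hv w hw hvw
      rcases Sym2.eq_iff.1 hvw with ⟨h, -⟩ | ⟨h, -⟩
      · exact h
      · exact absurd (h ▸ hgI w hw) (Finset.disjoint_left.1 hSI hv)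
    · refine Finset.disjoint_right.2 fun f hf hfR ↦ ?_
      obtain ⟨v, hv, rfl⟩ := mem_image.1 hf
      exact Finset.disjoint_left.1 hSI (hRS _ hfR (g v) (Sym2.mem_mk_right _ _)) (hgI v hv)
  have hE : ∀ f ∈ E, f ∈ T.edgeSet := by
    intro f hf
    rcases mem_union.1 hf with hf | hf
    · exact hR f hf
    · obtain ⟨v, hv, rfl⟩ := mem_image.1 hf
      exact hgadj v hv
  have hEU : ∀ f ∈ E, ∀ u ∈ f, u ∈ S ∪ I := by
    intro f hf u hu
    rcases mem_union.1 hf with hf | hf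
    · exact mem_union_left _ (hRS f hf u hu)
    · obtain ⟨v, hv, rfl⟩ := mem_image.1 hf
      rcases Sym2.mem_iff.1 hu with rfl | rfl
      · exact mem_union_left _ hv
      · exact mem_union_right _ (hgI v hv)
  have hforest := hT.card_add_one_le_card_of_endpoints_mem hE hEU (hI.mono subset_union_right)
  rw [hEcard, card_union_of_disjoint hSI] at hforest
  omega

end SimpleGraph

section CrosscutPair

variable {V : Type*} [Fintype V] [DecidableEq V] {G : SimpleGraph V} {I : Finset V}

lemma mem_cutEdges {e : Sym2 V} : e ∈ cutEdges G I ↔ e ∈ G.edgeSet ∧ ∀ a ∈ I, a ∉ e := by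
  simp [cutEdges]

lemma cutEdges_insert (v : V) : cutEdges G (insert v I) = {e ∈ cutEdges G I | v ∉ e} := by
  ext e
  simp only [mem_cutEdges, mem_filter, mem_insert, forall_eq_or_imp]
  tauto

lemma card_filter_mem_add_card_filter_cutEdges (hind : ∀ a ∈ I, ∀ b ∈ I, ¬ G.Adj a b)
    {e : Sym2 V} (he : e ∈ G.edgeSet) : #{a ∈ I | a ∈ e} + #{f ∈ cutEdges G I | f = e} = 1 := by
  rw [filter_eq']
  by_cases hcut : ∀ a ∈ I, a ∉ e
  · rw [filter_false_of_mem hcut, if_pos (mem_cutEdges.2 ⟨he, hcut⟩)]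
    simp
  · push Not at hcut
    obtain ⟨a, ha, hae⟩ := hcut
    have hsingle : {a ∈ I | a ∈ e} = {a} := by
      refine eq_singleton_iff_unique_mem.2 ⟨mem_filter.2 ⟨ha, hae⟩, fun b hb ↦ ?_⟩
      obtain ⟨hb, hbe⟩ := mem_filter.1 hb
      by_contra hba
      rw [(Sym2.mem_and_mem_iff hba).1 ⟨hbe, hae⟩] at he
      exact hind b hb a ha he
    rw [hsingle, if_neg fun h ↦ (mem_cutEdges.1 h).2 a ha hae]
    simp

lemma isCrosscut_expansion_disjSum (hind : ∀ a ∈ I, ∀ b ∈ I, ¬ G.Adj a b) :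
    IsCrosscut (expansion G) (I.disjSum (cutEdges G I)) := by
  classical
  intro ε hε
  simp only [expansion, mem_image] at hε
  obtain ⟨e, he, rfl⟩ := hε
  rw [← card_filter_mem_add_card_filter_cutEdges hind (SimpleGraph.mem_edgeFinset.1 he),
    ← card_disjSum]
  congr 1
  ext (x | f) <;> simp [and_comm]

lemma crosscutNum_expansion_le (hind : ∀ a ∈ I, ∀ b ∈ I, ¬ G.Adj a b) :
    crosscutNum (expansion G) ≤ #I + #(cutEdges G I) :=
  card_disjSum I _ ▸ Nat.sInf_le ⟨_, isCrosscut_expansion_disjSum hind, rfl⟩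

def IsOptimalCrosscutPair (G : SimpleGraph V) (I : Finset V) : Prop :=
  (∀ a ∈ I, ∀ b ∈ I, ¬ G.Adj a b) ∧ #I + #(cutEdges G I) = crosscutNum (expansion G)

lemma card_insert_add_card_cutEdges_insert_le {e : Sym2 V} (he : e ∈ cutEdges G I) {v : V}
    (hv : v ∈ e) : #(insert v I) + #(cutEdges G (insert v I)) ≤ #I + #(cutEdges G I) := by
  have hvI : v ∉ I := fun h ↦ (mem_cutEdges.1 he).2 v h hv
  have hlt : #(cutEdges G (insert v I)) < #(cutEdges G I) := by
    rw [cutEdges_insert]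
    exact card_lt_card (filter_ssubset.2 ⟨e, he, not_not.2 hv⟩)
  rw [card_insert_of_notMem hvI]
  omega

lemma exists_adj_mem_of_mem_cutEdges (hI : MaximalFor (IsOptimalCrosscutPair G) card I)
    {e : Sym2 V} (he : e ∈ cutEdges G I) {v : V} (hv : v ∈ e) : ∃ w ∈ I, G.Adj v w := by
  by_contra! hfree
  obtain ⟨⟨hind, hopt⟩, hmax⟩ := hI
  have hvI : v ∉ I := fun h ↦ (mem_cutEdges.1 he).2 v h hv
  have hind' : ∀ a ∈ insert v I, ∀ b ∈ insert v I, ¬ G.Adj a b := by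
    simp only [mem_insert, forall_eq_or_imp, G.irrefl, not_false_eq_true, true_and]
    exact ⟨hfree, fun a ha ↦ ⟨fun h ↦ hfree a ha h.symm, hind a ha⟩⟩
  have hopt' : IsOptimalCrosscutPair G (insert v I) :=
    ⟨hind', le_antisymm (hopt ▸ card_insert_add_card_cutEdges_insert_le he hv)
      (crosscutNum_expansion_le hind')⟩
  have := hmax hopt' (card_le_card (subset_insert v I))
  rw [card_insert_of_notMem hvI] at this
  omega

lemma not_isLeaf_of_mem_cutEdges (hI : MaximalFor (IsOptimalCrosscutPair G) card I)
    {e : Sym2 V} (he : e ∈ cutEdges G I) {v : V} (hv : v ∈ e) : ¬ IsLeaf G v := by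
  rintro ⟨u, -, hu⟩
  obtain ⟨w, hwI, hvw⟩ := exists_adj_mem_of_mem_cutEdges hI he hv
  obtain ⟨hedge, hdisj⟩ := mem_cutEdges.1 he
  rw [← Sym2.other_spec hv] at hedge hdisj
  refine hdisj w hwI ?_
  rw [hu w hvw, ← hu _ hedge]
  exact Sym2.mem_mk_right _ _

end CrosscutPair

lemma SimpleGraph.IsTree.card_cutEdges_lt_card {V : Type*} [Fintype V] [DecidableEq V]
    {T : SimpleGraph V} (hT : T.IsTree) {I : Finset V}
    (hI : MaximalFor (IsOptimalCrosscutPair T) card I) (hR : (cutEdges T I).Nonempty) :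
    #(cutEdges T I) < #I := by
  obtain ⟨e, he⟩ := hR
  obtain ⟨w, hw, -⟩ := exists_adj_mem_of_mem_cutEdges hI he e.out_fst_mem
  refine hT.card_lt_card_of_forall_exists_adj (S := {v | ∃ e ∈ cutEdges T I, v ∈ e})
    (fun f hf ↦ (mem_cutEdges.1 hf).1) (fun f hf v hv ↦ mem_filter.2 ⟨mem_univ v, f, hf, hv⟩)
    ?_ ?_ ⟨w, hw⟩
  · refine Finset.disjoint_left.2 fun v hv hvI ↦ ?_
    obtain ⟨f, hf, hvf⟩ := (mem_filter.1 hv).2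
    exact (mem_cutEdges.1 hf).2 v hvI hvf
  · intro v hv
    obtain ⟨f, hf, hvf⟩ := (mem_filter.1 hv).2
    exact exists_adj_mem_of_mem_cutEdges hI hf hvf

/-- Let `T` be a tree with `σ(T⁺) = ℓ + 1 > 0` and let `(I, R)` (where
`R = cutEdges T I`) be an optimal crosscut pair of `T` maximizing `|I|` among all
optimal crosscut pairs. Then (a) `|R| ≤ ℓ/2`, and (b) no pendant edge of `T` (an edge
containing a leaf) belongs to `R`. -/
theorem optimal_crosscut_pair_props {V : Type*} [Fintype V] [DecidableEq V]
    (T : SimpleGraph V) (hT : T.IsTree) (ℓ : ℕ)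
    (hσ : crosscutNum (expansion T) = ℓ + 1)
    (I : Finset V) (hind : ∀ a ∈ I, ∀ b ∈ I, ¬ T.Adj a b)
    (hopt : I.card + (cutEdges T I).card = ℓ + 1)
    (hmax : ∀ J : Finset V, (∀ a ∈ J, ∀ b ∈ J, ¬ T.Adj a b) →
      J.card + (cutEdges T J).card = ℓ + 1 → J.card ≤ I.card) :
    2 * (cutEdges T I).card ≤ ℓ ∧
      ∀ e ∈ cutEdges T I, ∀ v, v ∈ e → ¬ IsLeaf T v := by
  have hI : MaximalFor (IsOptimalCrosscutPair T) card I :=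
    ⟨⟨hind, hopt.trans hσ.symm⟩, fun J hJ _ ↦ hmax J hJ.1 (hJ.2.trans hσ)⟩
  refine ⟨?_, fun e he v hv ↦ not_isLeaf_of_mem_cutEdges hI he hv⟩
  rcases (cutEdges T I).eq_empty_or_nonempty with hR | hR
  · simp [hR]
  · have := hT.card_cutEdges_lt_card hI hR
    omega
end

section
/- If T is a tree whose two bipartition classes have equal size, then each of the two bipartition classes contains a leaf of T. -/
open Finset

/-- In a bipartite graph, the sum of degrees over one part equals the number of edges. -/
lemma sum_deg_part {V : Type*} [Fintype V] [DecidableEq V]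
    (T : SimpleGraph V) [DecidableRel T.Adj] (A : Finset V)
    (hbip : ∀ a b : V, T.Adj a b → (a ∈ A ↔ b ∉ A)) :
    ∑ a ∈ A, T.degree a = T.edgeFinset.card := by
  classical
  have : ∑ a ∈ A, T.degree a = (A.sigma fun a => T.neighborFinset a).card := by
    rw [Finset.card_sigma]; rfl
  rw [this]
  apply Finset.card_bij (fun p _ => s(p.1, p.2))
  · rintro ⟨a, b⟩ hp
    simp only [Finset.mem_sigma, SimpleGraph.mem_neighborFinset] at hp
    simpa [SimpleGraph.mem_edgeFinset] using hp.2
  · rintro ⟨a, b⟩ hp ⟨a', b'⟩ hp' h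
    simp only [Finset.mem_sigma, SimpleGraph.mem_neighborFinset] at hp hp'
    rw [Sym2.eq_iff] at h
    rcases h with ⟨h1, h2⟩ | ⟨h1, h2⟩
    · obtain rfl : a = a' := h1
      obtain rfl : b = b' := h2
      rfl
    · dsimp only at h1 h2; subst h1
      exact absurd hp.1 ((hbip _ _ hp'.2).mp hp'.1)
  · intro e he
    induction e using Sym2.ind with
    | _ x y =>
      rw [SimpleGraph.mem_edgeFinset, SimpleGraph.mem_edgeSet] at he
      by_cases hx : x ∈ A
      · exact ⟨⟨x, y⟩, by simp [Finset.mem_sigma, hx, he]⟩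
      · have hy : y ∈ A := by
          by_contra hy
          exact hx ((hbip x y he).mpr hy)
        exact ⟨⟨y, x⟩, by simp [Finset.mem_sigma, hy, he.symm], Sym2.eq_swap⟩

lemma part_has_leaf {V : Type*} [Fintype V] [DecidableEq V]
    (T : SimpleGraph V) [DecidableRel T.Adj] (hT : T.IsTree)
    (A : Finset V) (hbip : ∀ a b : V, T.Adj a b → (a ∈ A ↔ b ∉ A))
    (hcard : 2 * A.card = Fintype.card V) :
    ∃ a ∈ A, IsLeaf T a := by
  have hne : Nonempty V := hT.isConnected.nonempty
  have hposV : 0 < Fintype.card V := Fintype.card_pos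
  have hApos : 0 < A.card := by omega
  have hV2 : 2 ≤ Fintype.card V := by omega
  -- every vertex has positive degree
  have hdeg1 : ∀ a : V, 1 ≤ T.degree a := by
    intro a
    obtain ⟨b, hb⟩ := Fintype.exists_ne_of_one_lt_card (by omega) a
    obtain ⟨p⟩ := hT.isConnected.preconnected a b
    cases p with
    | nil => exact absurd rfl hb.symm
    | cons h _ => exact (T.degree_pos_iff_exists_adj a).mpr ⟨_, h⟩
  have hedges : T.edgeFinset.card + 1 = Fintype.card V := hT.card_edgeFinset
  have hsum : ∑ a ∈ A, T.degree a = T.edgeFinset.card := sum_deg_part T A hbip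
  -- find a vertex of degree exactly 1
  by_contra hno
  push_neg at hno
  have hdeg2 : ∀ a ∈ A, 2 ≤ T.degree a := by
    intro a ha
    have h1 := hdeg1 a
    by_contra h
    have h' : (T.neighborFinset a).card = 1 := by
      have : T.degree a = 1 := by omega
      exact this
    apply hno a ha
    obtain ⟨w, hw⟩ := Finset.card_eq_one.mp h'
    refine ⟨w, ?_, ?_⟩
    · have : w ∈ T.neighborFinset a := by rw [hw]; exact Finset.mem_singleton_self w
      exact (SimpleGraph.mem_neighborFinset T a w).mp this
    · intro y hy
      have : y ∈ T.neighborFinset a := (SimpleGraph.mem_neighborFinset T a y).mpr hy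
      rw [hw, Finset.mem_singleton] at this
      exact this
  have : 2 * A.card ≤ ∑ a ∈ A, T.degree a := by
    calc 2 * A.card = ∑ _a ∈ A, 2 := by rw [Finset.sum_const, smul_eq_mul, mul_comm]
    _ ≤ ∑ a ∈ A, T.degree a := Finset.sum_le_sum hdeg2
  omega

/-- If the two bipartition classes `A` and `Aᶜ` of a tree `T` have equal size, then each
of them contains a leaf of `T`. -/
theorem tree_equal_parts_leaves {V : Type*} [Fintype V] [DecidableEq V]
    (T : SimpleGraph V) (hT : T.IsTree)
    (A : Finset V) (hbip : ∀ a b : V, T.Adj a b → (a ∈ A ↔ b ∉ A))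
    (hcard : 2 * A.card = Fintype.card V) :
    (∃ a ∈ A, IsLeaf T a) ∧ (∃ b ∈ Aᶜ, IsLeaf T b) := by
  classical
  refine ⟨part_has_leaf T hT A hbip hcard, ?_⟩
  have hbip' : ∀ a b : V, T.Adj a b → (a ∈ Aᶜ ↔ b ∉ Aᶜ) := by
    intro a b hab
    have := hbip a b hab
    simp only [Finset.mem_compl]
    tauto
  have hcard' : 2 * Aᶜ.card = Fintype.card V := by
    rw [Finset.card_compl]
    omega
  exact part_has_leaf T hT Aᶜ hbip' hcard'
end

section
/- Let G be a graph on k vertices with at least one edge and σ(G^+) = 2. Then either G is a subgraph of S*_{k-1} (the star with k-1 edges together with one extra edge joining two of its leaves) or G is a subgraph of the complete bipartite graph K_{2,k-2}. Equivalently, either some vertex of G covers all but one edge of G and that remaining edge joins two leaves, or two non-adjacent vertices of G together cover all edges of G. -/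
open Finset

/-- The graph `S*_{k-1}` on `k` vertices: a star with center `0` and `k-1` edges,
together with one extra edge joining the two leaves `1` and `2`. -/
def starPlus (k : ℕ) : SimpleGraph (Fin k) :=
  SimpleGraph.fromRel fun a b => a.val = 0 ∨ b.val = 0 ∨ (a.val = 1 ∧ b.val = 2)

/-- The complete bipartite graph `K_{2,k-2}` on `k` vertices, with parts `{0, 1}` and
`{2, …, k-1}`. -/
def completeBipTwo (k : ℕ) : SimpleGraph (Fin k) :=
  SimpleGraph.fromRel fun a b => a.val < 2 ∧ 2 ≤ b.val


lemma exists_adj {V : Type*} (G : SimpleGraph V) (h : G.edgeSet.Nonempty) :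
    ∃ a b, G.Adj a b := by
  obtain ⟨e, he⟩ := h
  induction e using Sym2.ind with
  | _ x y => exact ⟨x, y, he⟩

lemma exists_inj_two {V : Type*} [Fintype V] [DecidableEq V] {u v : V} (huv : u ≠ v)
    (hn : 2 ≤ Fintype.card V) :
    ∃ φ : V → Fin (Fintype.card V), Function.Injective φ ∧
      (φ u).val = 0 ∧ (φ v).val = 1 := by
  have e := Fintype.equivFin V
  set z0 : Fin (Fintype.card V) := ⟨0, by omega⟩ with hz0
  set z1 : Fin (Fintype.card V) := ⟨1, by omega⟩ with hz1
  set σ1 := Equiv.swap (e u) z0 with hσ1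
  set σ2 := Equiv.swap (σ1 (e v)) z1 with hσ2
  have h1 : σ1 (e u) = z0 := Equiv.swap_apply_left _ _
  have h2 : σ2 z0 = z0 := by
    apply Equiv.swap_apply_of_ne_of_ne
    · intro h
      exact huv (e.injective (σ1.injective (by rw [h1, h])))
    · intro h
      rw [hz0, hz1] at h
      exact absurd (congrArg Fin.val h) (by simp)
  refine ⟨fun w => σ2 (σ1 (e w)), ?_, ?_, ?_⟩
  · exact σ2.injective.comp (σ1.injective.comp e.injective)
  · show (σ2 (σ1 (e u))).val = 0
    rw [h1, h2]
  · show (σ2 (σ1 (e v))).val = 1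
    rw [show σ2 (σ1 (e v)) = z1 from Equiv.swap_apply_left _ _]

lemma exists_inj_three {V : Type*} [Fintype V] [DecidableEq V] {u a b : V}
    (hua : u ≠ a) (hub : u ≠ b) (hab : a ≠ b) (hn : 3 ≤ Fintype.card V) :
    ∃ φ : V → Fin (Fintype.card V), Function.Injective φ ∧
      (φ u).val = 0 ∧ (φ a).val = 1 ∧ (φ b).val = 2 := by
  have e := Fintype.equivFin V
  set z0 : Fin (Fintype.card V) := ⟨0, by omega⟩ with hz0
  set z1 : Fin (Fintype.card V) := ⟨1, by omega⟩ with hz1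
  set z2 : Fin (Fintype.card V) := ⟨2, by omega⟩ with hz2
  set σ1 := Equiv.swap (e u) z0 with hσ1
  set σ2 := Equiv.swap (σ1 (e a)) z1 with hσ2
  set σ3 := Equiv.swap (σ2 (σ1 (e b))) z2 with hσ3
  have h1u : σ1 (e u) = z0 := Equiv.swap_apply_left _ _
  have h2a : σ2 (σ1 (e a)) = z1 := Equiv.swap_apply_left _ _
  have h3b : σ3 (σ2 (σ1 (e b))) = z2 := Equiv.swap_apply_left _ _
  have h01 : z0 ≠ z1 := fun h => absurd (congrArg Fin.val h) (by simp [hz0, hz1])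
  have h02 : z0 ≠ z2 := fun h => absurd (congrArg Fin.val h) (by simp [hz0, hz2])
  have h12 : z1 ≠ z2 := fun h => absurd (congrArg Fin.val h) (by simp [hz1, hz2])
  have h2z0 : σ2 z0 = z0 := by
    apply Equiv.swap_apply_of_ne_of_ne
    · intro h
      exact hua (e.injective (σ1.injective (by rw [h1u, h]))).symm
    · exact h01
  have h3z0 : σ3 z0 = z0 := by
    apply Equiv.swap_apply_of_ne_of_ne
    · intro h
      have : σ2 (σ1 (e u)) = σ2 (σ1 (e b)) := by rw [h1u, h2z0, h]
      exact hub (e.injective (σ1.injective (σ2.injective this)))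
    · exact h02
  have h3z1 : σ3 z1 = z1 := by
    apply Equiv.swap_apply_of_ne_of_ne
    · intro h
      have : σ2 (σ1 (e a)) = σ2 (σ1 (e b)) := by rw [h2a, h]
      exact hab (e.injective (σ1.injective (σ2.injective this)))
    · exact h12
  refine ⟨fun w => σ3 (σ2 (σ1 (e w))), ?_, ?_, ?_, ?_⟩
  · exact σ3.injective.comp (σ2.injective.comp (σ1.injective.comp e.injective))
  · show (σ3 (σ2 (σ1 (e u)))).val = 0
    rw [h1u, h2z0, h3z0]
  · show (σ3 (σ2 (σ1 (e a)))).val = 1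
    rw [h2a, h3z1]
  · show (σ3 (σ2 (σ1 (e b)))).val = 2
    rw [h3b]

lemma star_case {V : Type*} [Fintype V] [DecidableEq V] (G : SimpleGraph V) (u : V)
    (hne : G.edgeSet.Nonempty) (hu : ∀ a b, G.Adj a b → a = u ∨ b = u) :
    ∃ φ : V → Fin (Fintype.card V), Function.Injective φ ∧
      ∀ a b, G.Adj a b → (starPlus (Fintype.card V)).Adj (φ a) (φ b) := by
  obtain ⟨a0, b0, hab0⟩ := exists_adj G hne
  have hw : ∃ w, w ≠ u := by
    rcases hu a0 b0 hab0 with h | h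
    · exact ⟨b0, by rw [← h]; exact hab0.ne.symm⟩
    · exact ⟨a0, by rw [← h]; exact hab0.ne⟩
  obtain ⟨w, hwu⟩ := hw
  have hn : 2 ≤ Fintype.card V := Fintype.one_lt_card_iff_nontrivial.mpr ⟨w, u, hwu⟩
  obtain ⟨φ, hinj, hφu, -⟩ := exists_inj_two (Ne.symm hwu) hn
  refine ⟨φ, hinj, fun a b hab => ?_⟩
  rw [starPlus, SimpleGraph.fromRel_adj]
  refine ⟨fun h => hab.ne (hinj h), ?_⟩
  rcases hu a b hab with rfl | rfl
  · exact Or.inl (Or.inl hφu)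
  · exact Or.inl (Or.inr (Or.inl hφu))

lemma starplus_case {V : Type*} [Fintype V] [DecidableEq V] (G : SimpleGraph V)
    (u a b : V) (hau : a ≠ u) (hbu : b ≠ u) (hab : a ≠ b)
    (hu : ∀ c d, G.Adj c d → s(c, d) = s(a, b) ∨ c = u ∨ d = u) :
    ∃ φ : V → Fin (Fintype.card V), Function.Injective φ ∧
      ∀ c d, G.Adj c d → (starPlus (Fintype.card V)).Adj (φ c) (φ d) := by
  have hn : 3 ≤ Fintype.card V := by
    have hc : ({u, a, b} : Finset V).card = 3 :=
      Finset.card_eq_three.mpr ⟨u, a, b, Ne.symm hau, Ne.symm hbu, hab, rfl⟩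
    have := Finset.card_le_univ ({u, a, b} : Finset V)
    rw [hc] at this
    exact this
  obtain ⟨φ, hinj, hφu, hφa, hφb⟩ := exists_inj_three (Ne.symm hau) (Ne.symm hbu) hab hn
  refine ⟨φ, hinj, fun c d hcd => ?_⟩
  rw [starPlus, SimpleGraph.fromRel_adj]
  refine ⟨fun h => hcd.ne (hinj h), ?_⟩
  rcases hu c d hcd with h | rfl | rfl
  · rw [Sym2.eq_iff] at h
    rcases h with ⟨rfl, rfl⟩ | ⟨rfl, rfl⟩
    · exact Or.inl (Or.inr (Or.inr ⟨hφa, hφb⟩))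
    · exact Or.inr (Or.inr (Or.inr ⟨hφa, hφb⟩))
  · exact Or.inl (Or.inl hφu)
  · exact Or.inl (Or.inr (Or.inl hφu))

lemma bip_case {V : Type*} [Fintype V] [DecidableEq V] (G : SimpleGraph V)
    (u v : V) (huv : u ≠ v)
    (hcov : ∀ a b, G.Adj a b →
      ((a = u ∨ a = v) ∧ b ≠ u ∧ b ≠ v) ∨ ((b = u ∨ b = v) ∧ a ≠ u ∧ a ≠ v)) :
    ∃ φ : V → Fin (Fintype.card V), Function.Injective φ ∧
      ∀ a b, G.Adj a b → (completeBipTwo (Fintype.card V)).Adj (φ a) (φ b) := by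
  have hn : 2 ≤ Fintype.card V := Fintype.one_lt_card_iff_nontrivial.mpr ⟨u, v, huv⟩
  obtain ⟨φ, hinj, hφu, hφv⟩ := exists_inj_two huv hn
  have hlow : ∀ c : V, (c = u ∨ c = v) → (φ c).val < 2 := by
    rintro c (rfl | rfl) <;> omega
  have hhigh : ∀ c : V, c ≠ u → c ≠ v → 2 ≤ (φ c).val := by
    intro c hcu hcv
    have h0 : (φ c).val ≠ 0 := fun h =>
      hcu (hinj (Fin.ext (by rw [h, hφu])))
    have h1 : (φ c).val ≠ 1 := fun h =>
      hcv (hinj (Fin.ext (by rw [h, hφv])))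
    omega
  refine ⟨φ, hinj, fun a b hab => ?_⟩
  rw [completeBipTwo, SimpleGraph.fromRel_adj]
  refine ⟨fun h => hab.ne (hinj h), ?_⟩
  rcases hcov a b hab with ⟨h1, h2, h3⟩ | ⟨h1, h2, h3⟩
  · exact Or.inl ⟨hlow a h1, hhigh b h2 h3⟩
  · exact Or.inr ⟨hlow b h1, hhigh a h2 h3⟩

/-- Let `G` be a graph on `k` vertices with at least one edge and `σ(G⁺) = 2`. Then
`G` is a subgraph of `S*_{k-1}` (the star with `k-1` edges plus an edge joining two of
its leaves) or a subgraph of the complete bipartite graph `K_{2,k-2}`. -/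
theorem sigma_two_structure {V : Type*} [Fintype V] [DecidableEq V]
    (G : SimpleGraph V) (hne : G.edgeSet.Nonempty)
    (hσ : crosscutNum (expansion G) = 2) :
    (∃ φ : V → Fin (Fintype.card V), Function.Injective φ ∧
        ∀ a b : V, G.Adj a b → (starPlus (Fintype.card V)).Adj (φ a) (φ b)) ∨
    (∃ φ : V → Fin (Fintype.card V), Function.Injective φ ∧
        ∀ a b : V, G.Adj a b → (completeBipTwo (Fintype.card V)).Adj (φ a) (φ b)) := by
  classical
  -- obtain a crosscut of size 2
  have h2 : ∃ X : Finset (V ⊕ Sym2 V), IsCrosscut (expansion G) X ∧ X.card = 2 := by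
    unfold crosscutNum at hσ
    have hset : {m | ∃ X : Finset (V ⊕ Sym2 V),
        IsCrosscut (expansion G) X ∧ X.card = m}.Nonempty := by
      by_contra h
      rw [Set.not_nonempty_iff_eq_empty] at h
      rw [h, Nat.sInf_empty] at hσ
      exact absurd hσ (by omega)
    have := Nat.sInf_mem hset
    rw [hσ] at this
    exact this
  obtain ⟨X, hX, hXc⟩ := h2
  obtain ⟨x, y, hxy, rfl⟩ := Finset.card_eq_two.mp hXc
  -- expanded edges
  have hmem : ∀ a b : V, G.Adj a b →
      ({Sum.inr s(a,b), Sum.inl a, Sum.inl b} : Finset (V ⊕ Sym2 V)) ∈ expansion G := by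
    intro a b hab
    simp only [expansion, Finset.mem_image]
    refine ⟨s(a,b), by simp [SimpleGraph.mem_edgeFinset, hab], ?_⟩
    ext z
    rcases z with w | f
    · simp [Sym2.mem_iff, eq_comm]
    · simp
  -- key: for each edge exactly one of the three vertices is in the crosscut
  have key : ∀ a b : V, G.Adj a b →
      (Sum.inr s(a,b) ∈ ({x,y} : Finset (V ⊕ Sym2 V)) ∧
        Sum.inl a ∉ ({x,y} : Finset (V ⊕ Sym2 V)) ∧
        Sum.inl b ∉ ({x,y} : Finset (V ⊕ Sym2 V))) ∨
      (Sum.inl a ∈ ({x,y} : Finset (V ⊕ Sym2 V)) ∧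
        Sum.inl b ∉ ({x,y} : Finset (V ⊕ Sym2 V)) ∧
        Sum.inr s(a,b) ∉ ({x,y} : Finset (V ⊕ Sym2 V))) ∨
      (Sum.inl b ∈ ({x,y} : Finset (V ⊕ Sym2 V)) ∧
        Sum.inl a ∉ ({x,y} : Finset (V ⊕ Sym2 V)) ∧
        Sum.inr s(a,b) ∉ ({x,y} : Finset (V ⊕ Sym2 V))) := by
    intro a b hab
    have h1 := hX _ (hmem a b hab)
    obtain ⟨z, hz⟩ := Finset.card_eq_one.mp h1
    have ht : ∀ t : V ⊕ Sym2 V,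
        t ∈ ({Sum.inr s(a,b), Sum.inl a, Sum.inl b} : Finset (V ⊕ Sym2 V)) →
        t ∈ ({x,y} : Finset (V ⊕ Sym2 V)) → t = z := by
      intro t h1' h2'
      have : t ∈ ({Sum.inr s(a,b), Sum.inl a, Sum.inl b} : Finset (V ⊕ Sym2 V)) ∩ {x,y} :=
        Finset.mem_inter.mpr ⟨h1', h2'⟩
      rw [hz] at this
      exact Finset.mem_singleton.mp this
    have hzmem : z ∈ ({Sum.inr s(a,b), Sum.inl a, Sum.inl b} : Finset (V ⊕ Sym2 V)) ∩ {x,y} := by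
      rw [hz]; exact Finset.mem_singleton_self z
    rw [Finset.mem_inter] at hzmem
    obtain ⟨hz1, hz2⟩ := hzmem
    simp only [Finset.mem_insert, Finset.mem_singleton] at hz1
    rcases hz1 with rfl | rfl | rfl
    · refine Or.inl ⟨hz2, fun h => ?_, fun h => ?_⟩
      · exact absurd (ht _ (by simp) h) (by simp)
      · exact absurd (ht _ (by simp) h) (by simp)
    · refine Or.inr (Or.inl ⟨hz2, fun h => ?_, fun h => ?_⟩)
      · exact hab.ne (Sum.inl.inj (ht _ (by simp) h)).symm
      · exact absurd (ht _ (by simp) h) (by simp)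
    · refine Or.inr (Or.inr ⟨hz2, fun h => ?_, fun h => ?_⟩)
      · exact hab.ne (Sum.inl.inj (ht _ (by simp) h))
      · exact absurd (ht _ (by simp) h) (by simp)
  clear hX hmem hXc
  rcases x with u | f <;> rcases y with v | g
  · -- two graph vertices: K_{2,k-2}
    right
    have huv : u ≠ v := fun h => hxy (congrArg Sum.inl h)
    apply bip_case G u v huv
    intro a b hab
    rcases key a b hab with ⟨h1, -, -⟩ | ⟨h1, h2, -⟩ | ⟨h1, h2, -⟩
    · simp at h1
    · simp only [Finset.mem_insert, Finset.mem_singleton, Sum.inl.injEq] at h1 h2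
      exact Or.inl ⟨h1, fun h => h2 (Or.inl h), fun h => h2 (Or.inr h)⟩
    · simp only [Finset.mem_insert, Finset.mem_singleton, Sum.inl.injEq] at h1 h2
      exact Or.inr ⟨h1, fun h => h2 (Or.inl h), fun h => h2 (Or.inr h)⟩
  · -- one graph vertex u, one expansion vertex g
    left
    by_cases hg : g ∈ G.edgeSet
    · obtain ⟨⟨a, b⟩, rfl⟩ := g.exists_rep
      have hadj : G.Adj a b := hg
      have hcore := key a b hadj
      have hau : a ≠ u ∧ b ≠ u := by
        rcases hcore with ⟨-, h2, h3⟩ | ⟨-, -, h3⟩ | ⟨-, -, h3⟩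
        · simp only [Finset.mem_insert, Finset.mem_singleton, Sum.inl.injEq] at h2 h3
          exact ⟨fun h => h2 (Or.inl h), fun h => h3 (Or.inl h)⟩
        · simp at h3
        · simp at h3
      apply starplus_case G u a b hau.1 hau.2 hadj.ne
      intro c d hcd
      rcases key c d hcd with ⟨h1, -, -⟩ | ⟨h1, -, -⟩ | ⟨h1, -, -⟩ <;>
        simp only [Finset.mem_insert, Finset.mem_singleton, Sum.inl.injEq,
          Sum.inr.injEq, reduceCtorEq, false_or, or_false] at h1
      · exact Or.inl h1
      · exact Or.inr (Or.inl h1)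
      · exact Or.inr (Or.inr h1)
    · apply star_case G u hne
      intro a b hab
      rcases key a b hab with ⟨h1, -, -⟩ | ⟨h1, -, -⟩ | ⟨h1, -, -⟩ <;>
        simp only [Finset.mem_insert, Finset.mem_singleton, Sum.inl.injEq,
          Sum.inr.injEq, reduceCtorEq, false_or, or_false] at h1
      · exact absurd (h1 ▸ hab : g ∈ G.edgeSet) hg
      · exact Or.inl h1
      · exact Or.inr h1
  · -- one expansion vertex f, one graph vertex v (symmetric)
    left
    by_cases hf : f ∈ G.edgeSet
    · obtain ⟨⟨a, b⟩, rfl⟩ := f.exists_rep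
      have hadj : G.Adj a b := hf
      have hcore := key a b hadj
      have hau : a ≠ v ∧ b ≠ v := by
        rcases hcore with ⟨-, h2, h3⟩ | ⟨-, -, h3⟩ | ⟨-, -, h3⟩
        · simp only [Finset.mem_insert, Finset.mem_singleton, Sum.inl.injEq] at h2 h3
          exact ⟨fun h => h2 (Or.inr h), fun h => h3 (Or.inr h)⟩
        · simp at h3
        · simp at h3
      apply starplus_case G v a b hau.1 hau.2 hadj.ne
      intro c d hcd
      rcases key c d hcd with ⟨h1, -, -⟩ | ⟨h1, -, -⟩ | ⟨h1, -, -⟩ <;>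
        simp only [Finset.mem_insert, Finset.mem_singleton, Sum.inl.injEq,
          Sum.inr.injEq, reduceCtorEq, false_or, or_false] at h1
      · exact Or.inl h1
      · exact Or.inr (Or.inl h1)
      · exact Or.inr (Or.inr h1)
    · apply star_case G v hne
      intro a b hab
      rcases key a b hab with ⟨h1, -, -⟩ | ⟨h1, -, -⟩ | ⟨h1, -, -⟩ <;>
        simp only [Finset.mem_insert, Finset.mem_singleton, Sum.inl.injEq,
          Sum.inr.injEq, reduceCtorEq, false_or, or_false] at h1
      · exact absurd (h1 ▸ hab : f ∈ G.edgeSet) hf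
      · exact Or.inl h1
      · exact Or.inr h1
  · -- two expansion vertices
    have hfg : ∀ a b, G.Adj a b → s(a,b) = f ∨ s(a,b) = g := by
      intro a b hab
      rcases key a b hab with ⟨h1, -, -⟩ | ⟨h1, -, -⟩ | ⟨h1, -, -⟩ <;>
        simp only [Finset.mem_insert, Finset.mem_singleton, Sum.inl.injEq,
          Sum.inr.injEq, reduceCtorEq, false_or, or_false, or_self] at h1
      exact h1
    by_cases hshare : ∃ w, w ∈ f ∧ w ∈ g
    · obtain ⟨w, hwf, hwg⟩ := hshare
      left
      apply star_case G w hne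
      intro a b hab
      rcases hfg a b hab with h | h
      · rw [← h, Sym2.mem_iff] at hwf
        exact hwf.imp Eq.symm Eq.symm
      · rw [← h, Sym2.mem_iff] at hwg
        exact hwg.imp Eq.symm Eq.symm
    · push_neg at hshare
      by_cases hf : f ∈ G.edgeSet
      · by_cases hg : g ∈ G.edgeSet
        · obtain ⟨⟨a, b⟩, rfl⟩ := f.exists_rep
          obtain ⟨⟨c, d⟩, rfl⟩ := g.exists_rep
          have hab : G.Adj a b := hf
          have hcd : G.Adj c d := hg
          have hac : a ≠ c := fun h => hshare a (Sym2.mem_mk_left a b) (h ▸ Sym2.mem_mk_left c d)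
          have had : a ≠ d := fun h => hshare a (Sym2.mem_mk_left a b) (h ▸ Sym2.mem_mk_right c d)
          have hbc : b ≠ c := fun h => hshare b (Sym2.mem_mk_right a b) (h ▸ Sym2.mem_mk_left c d)
          have hbd : b ≠ d := fun h => hshare b (Sym2.mem_mk_right a b) (h ▸ Sym2.mem_mk_right c d)
          right
          apply bip_case G a c hac
          intro p q hpq
          rcases hfg p q hpq with h | h <;> rw [Sym2.eq_iff] at h <;>
            rcases h with ⟨rfl, rfl⟩ | ⟨rfl, rfl⟩
          · exact Or.inl ⟨Or.inl rfl, hab.ne', hbc⟩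
          · exact Or.inr ⟨Or.inl rfl, hab.ne', hbc⟩
          · exact Or.inl ⟨Or.inr rfl, had.symm, hcd.ne'⟩
          · exact Or.inr ⟨Or.inr rfl, had.symm, hcd.ne'⟩
        · obtain ⟨⟨a, b⟩, rfl⟩ := f.exists_rep
          left
          apply star_case G a hne
          intro p q hpq
          rcases hfg p q hpq with h | h
          · rw [Sym2.eq_iff] at h
            rcases h with ⟨rfl, rfl⟩ | ⟨rfl, rfl⟩
            · exact Or.inl rfl
            · exact Or.inr rfl
          · exact absurd (h ▸ hpq : g ∈ G.edgeSet) hg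
      · by_cases hg : g ∈ G.edgeSet
        · obtain ⟨⟨c, d⟩, rfl⟩ := g.exists_rep
          left
          apply star_case G c hne
          intro p q hpq
          rcases hfg p q hpq with h | h
          · exact absurd (h ▸ hpq : f ∈ G.edgeSet) hf
          · rw [Sym2.eq_iff] at h
            rcases h with ⟨rfl, rfl⟩ | ⟨rfl, rfl⟩
            · exact Or.inl rfl
            · exact Or.inr rfl
        · obtain ⟨a, b, hab⟩ := exists_adj G hne
          rcases hfg a b hab with h | h
          · exact absurd (h ▸ hab : f ∈ G.edgeSet) hf
          · exact absurd (h ▸ hab : g ∈ G.edgeSet) hg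
end
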